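/- arXiv:2505.03749 — 2 statements merged into one kernel-verified Lean document; each statement's English description precedes it below -/
import Mathlib

section
/- Let z = 1/2 + (√3/2)i (equilateral triangle) with longest edge from 0 to 1 trisected at 1/3 and 2/3. The middle triangle with vertices 1/3, 2/3, z, after normalization (scaling its longest edge, which is the edge from 1/3 to z, to the segment from 0 to 1), corresponds to the point 1/14 + (3√3/14)i in Σ; equivalently, the triangle with vertices 1/3, 2/3, 1/2 + (√3/2)i is directly similar or anti-similar to the triangle with vertices 0, 1, 1/14 + (3√3/14)i. -/
open Complex

theorem middle_triangle_normalization :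
    ∃ a b : ℂ, a ≠ 0 ∧
      ((({a * (1/3) + b, a * (2/3) + b, a * (1/2 + (Real.sqrt 3 / 2) * Complex.I) + b} : Set ℂ)
          = {0, 1, 1/14 + (3 * Real.sqrt 3 / 14) * Complex.I}) ∨
       (({a * (starRingEnd ℂ) (1/3) + b, a * (starRingEnd ℂ) (2/3) + b,
          a * (starRingEnd ℂ) (1/2 + (Real.sqrt 3 / 2) * Complex.I) + b} : Set ℂ)
          = {0, 1, 1/14 + (3 * Real.sqrt 3 / 14) * Complex.I})) := by
  have hs : (Real.sqrt 3 : ℂ) * (Real.sqrt 3 : ℂ) = 3 := by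
    rw [← Complex.ofReal_mul, Real.mul_self_sqrt (by norm_num)]
    norm_num
  refine ⟨3/14 + (9 * Real.sqrt 3 / 14) * Complex.I,
    -(1/14) - (3 * Real.sqrt 3 / 14) * Complex.I, ?_, Or.inr ?_⟩
  · intro h
    have him := congrArg Complex.re h
    simp at him
  · have h1 : (3/14 + (9 * Real.sqrt 3 / 14) * Complex.I) * (starRingEnd ℂ) (1/3)
        + (-(1/14) - (3 * Real.sqrt 3 / 14) * Complex.I) = 0 := by
      simp [map_div₀, map_ofNat]; ring
    have h2 : (3/14 + (9 * Real.sqrt 3 / 14) * Complex.I) * (starRingEnd ℂ) (2/3)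
        + (-(1/14) - (3 * Real.sqrt 3 / 14) * Complex.I)
        = 1/14 + (3 * Real.sqrt 3 / 14) * Complex.I := by
      simp [map_div₀, map_ofNat]; ring
    have h3 : (3/14 + (9 * Real.sqrt 3 / 14) * Complex.I) *
        (starRingEnd ℂ) (1/2 + (Real.sqrt 3 / 2) * Complex.I)
        + (-(1/14) - (3 * Real.sqrt 3 / 14) * Complex.I) = 1 := by
      have hs2 : (Real.sqrt 3 : ℂ) ^ 2 = 3 := by rw [sq, hs]
      simp [map_div₀, map_ofNat, Complex.conj_I, Complex.conj_ofReal]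
      ring_nf
      rw [Complex.I_sq]
      ring_nf
      rw [hs2]
      ring
    rw [h1, h2, h3]
    ext w
    simp [Set.mem_insert_iff]
    tauto
end

section
/- For every angle v of any triangle with vertices 0, 1, z where z lies in the closed hyperbolic disk of radius ln(√2) centered at ω₁ = 1/3 + (√2/3)i (in the Poincaré half-plane metric), the largest angle of the triangle is at most arccos(−5/(2√7)). -/
/-!
The closed hyperbolic disk of radius `log √2` about `ω₁` is the Euclidean disk of radius `1/6`
about `1/3 + i/2`. On it `1/6 ≤ Re z ≤ 1/2` and `Im z ≥ 1/3`, so the angles at `0` and `1` are at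
most `π/2`, and the angle at `0` has cosine at most `5/(2√7)`. Hence the angle at `z`, which is `π`
minus the other two, is at most `π - arccos (5/(2√7)) = arccos (-5/(2√7))`.
-/

open EuclideanGeometry Real

theorem norm_sub_le_mul_sinh_of_cosh_le {z w : ℂ} {r : ℝ} (hz : 0 < z.im) (hw : 0 < w.im)
    (hr : 0 ≤ r) (h : 1 + ‖z - w‖ ^ 2 / (2 * z.im * w.im) ≤ cosh r) :
    ‖z - ⟨w.re, w.im * cosh r⟩‖ ≤ w.im * sinh r := by
  have hdiv : ‖z - w‖ ^ 2 ≤ 2 * (cosh r - 1) * z.im * w.im := by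
    have := (div_le_iff₀ (by positivity)).mp (le_sub_iff_add_le'.mpr h)
    linarith
  have hsinh : 0 ≤ sinh r := sinh_nonneg_iff.mpr hr
  refine le_of_pow_le_pow_left₀ two_ne_zero (by positivity) ?_
  simp only [Complex.sq_norm, Complex.normSq_apply, Complex.sub_re, Complex.sub_im] at hdiv ⊢
  linear_combination hdiv + w.im ^ 2 * cosh_sq r

namespace Complex

theorem angle_one_zero_eq_arccos (z : ℂ) : ∠ (1 : ℂ) 0 z = arccos (z.re / ‖z‖) := by
  simp [EuclideanGeometry.angle, InnerProductGeometry.angle, inner]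

theorem angle_zero_one_eq_arccos (z : ℂ) : ∠ (0 : ℂ) 1 z = arccos ((1 - z.re) / ‖z - 1‖) := by
  norm_num [EuclideanGeometry.angle, InnerProductGeometry.angle, inner]

theorem angle_one_zero_le_pi_div_two {z : ℂ} (h : 0 ≤ z.re) : ∠ (1 : ℂ) 0 z ≤ π / 2 := by
  rw [angle_one_zero_eq_arccos, arccos_le_pi_div_two]
  positivity

theorem angle_zero_one_le_pi_div_two {z : ℂ} (h : z.re ≤ 1) : ∠ (0 : ℂ) 1 z ≤ π / 2 := by
  rw [angle_zero_one_eq_arccos, arccos_le_pi_div_two]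
  exact div_nonneg (sub_nonneg.mpr h) (norm_nonneg _)

theorem angle_zero_self_one_le_arccos_neg {z : ℂ} (hz : z ≠ 0) {c : ℝ} (h : z.re / ‖z‖ ≤ c) :
    ∠ (0 : ℂ) z 1 ≤ arccos (-c) := by
  have hsum := angle_add_angle_add_angle_eq_pi (1 : ℂ) hz
  have hc : arccos c ≤ ∠ (1 : ℂ) 0 z := angle_one_zero_eq_arccos z ▸ arccos_le_arccos h
  rw [arccos_neg]
  linarith [angle_nonneg z (1 : ℂ) 0]

theorem angles_le_arccos_neg {z : ℂ} (hz : z ≠ 0) (hre₀ : 0 ≤ z.re) (hre₁ : z.re ≤ 1) {c : ℝ}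
    (hc : 0 ≤ c) (h : z.re / ‖z‖ ≤ c) :
    ∠ (1 : ℂ) 0 z ≤ arccos (-c) ∧ ∠ (0 : ℂ) 1 z ≤ arccos (-c) ∧ ∠ (0 : ℂ) z 1 ≤ arccos (-c) := by
  have hright : π / 2 ≤ arccos (-c) := arccos_zero ▸ arccos_le_arccos (by linarith)
  exact ⟨(angle_one_zero_le_pi_div_two hre₀).trans hright,
    (angle_zero_one_le_pi_div_two hre₁).trans hright, angle_zero_self_one_le_arccos_neg hz h⟩

end Complex

theorem cosh_log_sqrt_two : cosh (log √2) = 3 * √2 / 4 := by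
  rw [cosh_log (by positivity)]
  have : √2 ^ 2 = 2 := sq_sqrt zero_le_two
  field_simp
  linarith

theorem sinh_log_sqrt_two : sinh (log √2) = √2 / 4 := by
  rw [sinh_log (by positivity)]
  have : √2 ^ 2 = 2 := sq_sqrt zero_le_two
  field_simp
  linarith

theorem re_div_norm_le_five_div_two_sqrt_seven {z : ℂ} (hre : z.re ≤ 1 / 2) (him : 1 / 3 ≤ z.im) :
    z.re / ‖z‖ ≤ 5 / (2 * √7) := by
  have hz : 0 < ‖z‖ := norm_pos_iff.mpr fun h ↦ by simp [h] at him; linarith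
  rw [div_le_div_iff₀ hz (by positivity)]
  rcases le_or_gt z.re 0 with hneg | hpos
  · nlinarith [sqrt_nonneg 7]
  refine le_of_pow_le_pow_left₀ two_ne_zero (by positivity) ?_
  have h7 : √7 ^ 2 = 7 := sq_sqrt (by norm_num)
  rw [mul_pow, mul_pow, mul_pow, h7, Complex.sq_norm, Complex.normSq_apply]
  nlinarith

noncomputable def ω₁ : ℂ := 1 / 3 + (√2 / 3) * Complex.I

theorem ω₁_re : ω₁.re = 1 / 3 := by simp [ω₁]

theorem ω₁_im : ω₁.im = √2 / 3 := by simp [ω₁]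

theorem norm_sub_le_one_sixth_of_cosh_le {z : ℂ} (hz : 0 < z.im)
    (h : 1 + ‖z - ω₁‖ ^ 2 / (2 * z.im * ω₁.im) ≤ cosh (log √2)) :
    ‖z - ⟨1 / 3, 1 / 2⟩‖ ≤ 1 / 6 := by
  have h2 : √2 ^ 2 = 2 := sq_sqrt zero_le_two
  have hcenter : ω₁.im * cosh (log √2) = 1 / 2 := by
    rw [ω₁_im, cosh_log_sqrt_two]
    linear_combination h2 / 4
  have hradius : ω₁.im * sinh (log √2) = 1 / 6 := by
    rw [ω₁_im, sinh_log_sqrt_two]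
    linear_combination h2 / 12
  have := norm_sub_le_mul_sinh_of_cosh_le hz (by rw [ω₁_im]; positivity)
    (log_nonneg (one_le_sqrt.mpr one_le_two)) h
  rwa [hcenter, hradius, ω₁_re] at this

theorem angles_bounded_in_hyperbolic_disk
    (d : ℂ → ℂ → ℝ)
    (hd : ∀ z₁ z₂ : ℂ, 0 < z₁.im → 0 < z₂.im →
      0 ≤ d z₁ z₂ ∧
      Real.cosh (d z₁ z₂) = 1 + ‖z₁ - z₂‖ ^ 2 / (2 * z₁.im * z₂.im))
    (z : ℂ) (hz : 0 < z.im)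
    (hdisk : d z (1/3 + (Real.sqrt 2 / 3) * Complex.I) ≤ Real.log (Real.sqrt 2)) :
    EuclideanGeometry.angle (1 : ℂ) 0 z ≤ Real.arccos (-5 / (2 * Real.sqrt 7)) ∧
    EuclideanGeometry.angle (0 : ℂ) 1 z ≤ Real.arccos (-5 / (2 * Real.sqrt 7)) ∧
    EuclideanGeometry.angle (0 : ℂ) z 1 ≤ Real.arccos (-5 / (2 * Real.sqrt 7)) := by
  obtain ⟨hd₀, hcosh⟩ := hd z ω₁ hz (by rw [ω₁_im]; positivity)
  have hr : 0 ≤ log √2 := log_nonneg (one_le_sqrt.mpr one_le_two)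
  have hle : cosh (d z ω₁) ≤ cosh (log √2) :=
    cosh_le_cosh.mpr (by rwa [abs_of_nonneg hd₀, abs_of_nonneg hr])
  have hball := norm_sub_le_one_sixth_of_cosh_le hz (hcosh ▸ hle)
  have hre := abs_le.mp ((Complex.abs_re_le_norm _).trans hball)
  have him := abs_le.mp ((Complex.abs_im_le_norm _).trans hball)
  simp only [Complex.sub_re, Complex.sub_im] at hre him
  rw [neg_div]
  exact Complex.angles_le_arccos_neg (fun h ↦ by simp [h] at hz) (by linarith) (by linarith)
    (by positivity) (re_div_norm_le_five_div_two_sqrt_seven (by linarith) (by linarith))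
end
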